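/- (Dual certificate / weak duality for the switch-simulation SDP.) Fix k ≥ 1 and a word w ∈ {A,B}^k. Let {J^A_i}_{i∈I} and {J^B_j}_{j∈J'} be finite families of qubit-channel Choi operators, let {R_{ij}} be Hermitian 2×2 matrices with Σ_{i,j} Tr[R_{ij} · R(J^A_i, J^B_j)] = 1, and let Γ be a positive semidefinite matrix on the k-slot comb space (qubit factors I_1,O_1,…,I_k,O_k,F) such that (i) Tr(C·Γ) = Tr(Γ)/2^{k+1} for every k-slot quantum comb C (restricted scenario), and (ii) Γ − Σ_{i,j} (J_{w_1}^{(ij)} ⊗ ⋯ ⊗ J_{w_k}^{(ij)})^T ⊗ R_{ij} is positive semidefinite, where J_{w_m}^{(ij)} := J^A_i if w_m = A and J^B_j if w_m = B, the m-th factor acting on I_m⊗O_m and R_{ij} acting on F. Then every p ∈ ℝ for which there exist a k-slot quantum comb C and a matrix C_s with C_s and C − C_s positive semidefinite and C_s * (J_{w_1}^{(ij)} ⊗ ⋯ ⊗ J_{w_k}^{(ij)}) = p · R(J^A_i, J^B_j) for all i ∈ I, j ∈ J', satisfies p ≤ Tr(Γ)/2^{k+1}. -/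

import Mathlib

open scoped BigOperators ComplexOrder

noncomputable section

/-- The index space of one comb slot / one channel: input qubit × output qubit. -/
abbrev Duo : Type := Fin 2 × Fin 2

/-- Partial trace over the (second) output factor of a matrix on ℂ²⊗ℂ². -/
def ptraceO (M : Matrix Duo Duo ℂ) : Matrix (Fin 2) (Fin 2) ℂ :=
  Matrix.of fun i i' => ∑ o : Fin 2, M (i, o) (i', o)

/-- A qubit-channel Choi operator: positive semidefinite, with output partial trace 1₂. -/
def IsChoi (J : Matrix Duo Duo ℂ) : Prop :=
  J.PosSemidef ∧ ptraceO J = 1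

/-- Amplitudes of the vector |s₊₀⟩ on the qubit systems A_I, A_O, B_I, B_O, t_O, c_O:
|s₊₀⟩ = (1/√2)(|0⟩^{A_I}|𝟙⟩^{A_O B_I}|𝟙⟩^{B_O t_O}|0⟩^{c_O}
            + |1⟩^{B_I}|𝟙⟩^{B_O A_I}|𝟙⟩^{A_O t_O}|1⟩^{c_O}). -/
def sVec (aI aO bI bO t c : Fin 2) : ℂ :=
  (Real.sqrt 2 : ℂ)⁻¹ *
    ((if aI = 0 ∧ aO = bI ∧ bO = t ∧ c = 0 then 1 else 0) +
     (if bI = 1 ∧ bO = aI ∧ aO = t ∧ c = 1 then 1 else 0))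

/-- R(J_A,J_B) := Tr_{t_O}(S₊₀) * (J_A ⊗ J_B), with S₊₀ = |s₊₀⟩⟨s₊₀|: the 2×2 output
control state of the quantum switch on channels J_A, J_B with control |+⟩, target |0⟩,
and target output discarded (the link product contracts A_I,A_O,B_I,B_O). -/
def Rswitch (JA JB : Matrix Duo Duo ℂ) : Matrix (Fin 2) (Fin 2) ℂ :=
  Matrix.of fun c c' =>
    ∑ aI : Fin 2, ∑ aO : Fin 2, ∑ bI : Fin 2, ∑ bO : Fin 2,
    ∑ aI' : Fin 2, ∑ aO' : Fin 2, ∑ bI' : Fin 2, ∑ bO' : Fin 2, ∑ t : Fin 2,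
      JA (aI, aO) (aI', aO') * JB (bI, bO) (bI', bO') *
        (sVec aI aO bI bO t c * star (sVec aI' aO' bI' bO' t c'))

/-- Index space of a k-slot comb in the restricted scenario:
slots I₁O₁,…,I_kO_k together with the final (output control) qubit F. -/
abbrev CombIx (k : ℕ) : Type := (Fin k → Duo) × Fin 2

/-- A k-slot quantum comb (restricted scenario): C ≥ 0 and there are reduced combs C^{(m)}
with Tr_F C = C^{(k)}, Tr_{O_m} C^{(m)} = C^{(m-1)} ⊗ 1_{I_m} (2 ≤ m ≤ k),
and Tr_{O_1} C^{(1)} = 1_{I_1}. -/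
def IsComb (k : ℕ) (C : Matrix (CombIx k) (CombIx k) ℂ) : Prop :=
  C.PosSemidef ∧
  ∃ Cm : (m : ℕ) → Matrix (Fin m → Duo) (Fin m → Duo) ℂ,
    (∀ s s' : Fin k → Duo, ∑ f : Fin 2, C (s, f) (s', f) = Cm k s s') ∧
    (∀ n : ℕ, n + 2 ≤ k → ∀ (s s' : Fin (n + 1) → Duo) (i i' : Fin 2),
      ∑ o : Fin 2, Cm (n + 2) (Fin.snoc s (i, o)) (Fin.snoc s' (i', o)) =
        Cm (n + 1) s s' * (if i = i' then 1 else 0)) ∧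
    (∀ i i' : Fin 2, ∑ o : Fin 2, Cm 1 (fun _ => (i, o)) (fun _ => (i', o)) =
      if i = i' then 1 else 0)

/-- The link product C * (J₁ ⊗ ⋯ ⊗ J_k): the m-th tensor factor acts on the slot I_m⊗O_m,
the contraction is over all slots, and the result is a 2×2 matrix on F = c_O. -/
def combLink {k : ℕ} (C : Matrix (CombIx k) (CombIx k) ℂ)
    (Js : Fin k → Matrix Duo Duo ℂ) : Matrix (Fin 2) (Fin 2) ℂ :=
  Matrix.of fun c c' => ∑ s : Fin k → Duo, ∑ s' : Fin k → Duo,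
    (∏ m, Js m (s m) (s' m)) * C (s, c) (s', c')

/-- The letters of an order word. -/
inductive Letter : Type
  | A : Letter
  | B : Letter
deriving DecidableEq

/-- Pick the channel corresponding to a letter. -/
def Letter.pick {α : Type*} : Letter → α → α → α
  | Letter.A, a, _ => a
  | Letter.B, _, b => b

/-!
Weak duality: since `Cs ≤ C` and `Γ ≥ 0`, and since `Γ` dominates the operator
`D = ∑ᵢⱼ (J^{(ij)}_{w₁} ⊗ ⋯ ⊗ J^{(ij)}_{w_k})ᵀ ⊗ R_{ij}`, positivity of traces of products of
positive semidefinite matrices gives `Tr(Cs D) ≤ Tr(Cs Γ) ≤ Tr(C Γ) = Tr Γ / 2^{k+1}`.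
Pairing `Cs` with `D` contracts the slots, turning `Tr(Cs D)` into
`∑ᵢⱼ Tr(R_{ij} (Cs * J^{(ij)})) = p ∑ᵢⱼ Tr(R_{ij} R(J^A_i, J^B_j)) = p`.
-/

namespace Matrix

variable {n 𝕜 : Type*} [Fintype n] [DecidableEq n] [RCLike 𝕜]

open scoped MatrixOrder in
lemma PosSemidef.trace_mul_nonneg {A B : Matrix n n 𝕜} (hA : A.PosSemidef) (hB : B.PosSemidef) :
    0 ≤ (A * B).trace := by
  obtain ⟨S, rfl⟩ := CStarAlgebra.nonneg_iff_eq_star_mul_self.mp hB.nonneg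
  rw [← mul_assoc, trace_mul_comm, ← mul_assoc, star_eq_conjTranspose]
  exact (hA.mul_mul_conjTranspose_same S).trace_nonneg

lemma trace_mul_le_trace_mul_right {A B C : Matrix n n 𝕜} (hA : A.PosSemidef)
    (hBC : (C - B).PosSemidef) : (A * B).trace ≤ (A * C).trace := by
  simpa only [mul_sub, trace_sub, sub_nonneg] using hA.trace_mul_nonneg hBC

lemma trace_mul_le_trace_mul_left {A B C : Matrix n n 𝕜} (hAB : (B - A).PosSemidef)
    (hC : C.PosSemidef) : (A * C).trace ≤ (B * C).trace := by
  simpa only [sub_mul, trace_sub, sub_nonneg] using hAB.trace_mul_nonneg hC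

end Matrix

open Matrix

/-- `(J₁ ⊗ ⋯ ⊗ J_k)ᵀ ⊗ R` on the comb space. -/
def slotKronTranspose {k : ℕ} (Js : Fin k → Matrix Duo Duo ℂ) (Rm : Matrix (Fin 2) (Fin 2) ℂ) :
    Matrix (CombIx k) (CombIx k) ℂ :=
  of fun sf sf' => (∏ m, Js m (sf'.1 m) (sf.1 m)) * Rm sf.2 sf'.2

lemma trace_mul_slotKronTranspose {k : ℕ} (Cs : Matrix (CombIx k) (CombIx k) ℂ)
    (Js : Fin k → Matrix Duo Duo ℂ) (Rm : Matrix (Fin 2) (Fin 2) ℂ) :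
    (Cs * slotKronTranspose Js Rm).trace = (Rm * combLink Cs Js).trace := by
  rw [trace_mul_comm]
  simp only [trace, diag, mul_apply, slotKronTranspose, combLink, of_apply, Fintype.sum_prod_type,
    Finset.mul_sum]
  rw [Finset.sum_comm]
  refine Finset.sum_congr rfl fun c _ => ?_
  rw [Finset.sum_comm_cycle]
  refine Finset.sum_congr rfl fun f _ => ?_
  rw [Finset.sum_comm]
  refine Finset.sum_congr rfl fun s _ => Finset.sum_congr rfl fun s' _ => ?_
  ring

theorem switch_dual_certificate_general (k : ℕ) (w : Fin k → Letter)
    {I J' : Type} [Fintype I] [Fintype J']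
    (JA : I → Matrix Duo Duo ℂ) (JB : J' → Matrix Duo Duo ℂ)
    (R : I → J' → Matrix (Fin 2) (Fin 2) ℂ)
    (hRnorm : ∑ i : I, ∑ j : J', (R i j * Rswitch (JA i) (JB j)).trace = 1)
    (Γ : Matrix (CombIx k) (CombIx k) ℂ)
    (hΓpsd : Γ.PosSemidef)
    (hΓdual : ∀ C : Matrix (CombIx k) (CombIx k) ℂ, IsComb k C →
      (C * Γ).trace = Γ.trace / (2 : ℂ) ^ (k + 1))
    (hΓdom : (Γ - Matrix.of fun (sf sf' : CombIx k) =>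
        ∑ i : I, ∑ j : J',
          (∏ m, ((w m).pick (JA i) (JB j)) (sf'.1 m) (sf.1 m)) * R i j sf.2 sf'.2).PosSemidef)
    (p : ℝ)
    (hp : ∃ C Cs : Matrix (CombIx k) (CombIx k) ℂ,
      IsComb k C ∧ Cs.PosSemidef ∧ (C - Cs).PosSemidef ∧
      ∀ (i : I) (j : J'),
        combLink Cs (fun m => (w m).pick (JA i) (JB j))
          = (p : ℂ) • Rswitch (JA i) (JB j)) :
    p ≤ Γ.trace.re / 2 ^ (k + 1) := by
  obtain ⟨C, Cs, hC, hCs, hCCs, hlink⟩ := hp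
  set D := ∑ i, ∑ j, slotKronTranspose (fun m => (w m).pick (JA i) (JB j)) (R i j)
  have hD : (Matrix.of fun (sf sf' : CombIx k) => ∑ i : I, ∑ j : J',
      (∏ m, ((w m).pick (JA i) (JB j)) (sf'.1 m) (sf.1 m)) * R i j sf.2 sf'.2) = D := by
    ext sf sf'
    simp only [D, of_apply, Matrix.sum_apply, slotKronTranspose]
  have hpair : (Cs * D).trace = p := by
    simp only [D, Matrix.mul_sum, trace_sum, trace_mul_slotKronTranspose, hlink,
      Matrix.mul_smul, trace_smul, smul_eq_mul]
    simp_rw [← Finset.mul_sum]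
    rw [hRnorm, mul_one]
  have hbound : (p : ℂ) ≤ (((2 ^ (k + 1))⁻¹ : ℝ) : ℂ) * Γ.trace := by
    calc (p : ℂ) = (Cs * D).trace := hpair.symm
      _ ≤ (Cs * Γ).trace := trace_mul_le_trace_mul_right hCs (hD ▸ hΓdom)
      _ ≤ (C * Γ).trace := trace_mul_le_trace_mul_left hCCs hΓpsd
      _ = (((2 ^ (k + 1))⁻¹ : ℝ) : ℂ) * Γ.trace := by rw [hΓdual C hC]; push_cast; ring
  have hre := (Complex.le_def.mp hbound).1
  rwa [Complex.re_ofReal_mul, Complex.ofReal_re, ← div_eq_inv_mul] at hre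

/-- Dual certificate / weak duality for the switch-simulation SDP: any dual feasible point
(R_{ij}, Γ) upper-bounds the success probability of every probabilistic restricted
simulation on the given families of input channels by Tr(Γ)/2^{k+1}. -/
theorem switch_dual_certificate (k : ℕ) (hk : 1 ≤ k) (w : Fin k → Letter)
    {I J' : Type} [Fintype I] [Fintype J']
    (JA : I → Matrix Duo Duo ℂ) (JB : J' → Matrix Duo Duo ℂ)
    (hJA : ∀ i, IsChoi (JA i)) (hJB : ∀ j, IsChoi (JB j))
    (R : I → J' → Matrix (Fin 2) (Fin 2) ℂ)
    (hRherm : ∀ i j, (R i j).IsHermitian)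
    (hRnorm : ∑ i : I, ∑ j : J', (R i j * Rswitch (JA i) (JB j)).trace = 1)
    (Γ : Matrix (CombIx k) (CombIx k) ℂ)
    (hΓpsd : Γ.PosSemidef)
    (hΓdual : ∀ C : Matrix (CombIx k) (CombIx k) ℂ, IsComb k C →
      (C * Γ).trace = Γ.trace / (2 : ℂ) ^ (k + 1))
    (hΓdom : (Γ - Matrix.of fun (sf sf' : CombIx k) =>
        ∑ i : I, ∑ j : J',
          (∏ m, ((w m).pick (JA i) (JB j)) (sf'.1 m) (sf.1 m)) * R i j sf.2 sf'.2).PosSemidef)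
    (p : ℝ)
    (hp : ∃ C Cs : Matrix (CombIx k) (CombIx k) ℂ,
      IsComb k C ∧ Cs.PosSemidef ∧ (C - Cs).PosSemidef ∧
      ∀ (i : I) (j : J'),
        combLink Cs (fun m => (w m).pick (JA i) (JB j))
          = (p : ℂ) • Rswitch (JA i) (JB j)) :
    p ≤ Γ.trace.re / 2 ^ (k + 1) :=
  switch_dual_certificate_general k w JA JB R hRnorm Γ hΓpsd hΓdual hΓdom p hp
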